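/- Let S = {1,2,3} and let Σ be the semigroup of all self-maps of S under composition. Let σ⁽¹⁾ ∈ Σ be the map 1↦2, 2↦1, 3↦2, and σ⁽²⁾ ∈ Σ the map 1↦3, 2↦3, 3↦1. Let p, q > 0 with p + q = 1, let μ be the probability measure on Σ with μ({σ⁽¹⁾}) = p and μ({σ⁽²⁾}) = q, and let the noise law be μ_k = μ for all k ∈ -ℕ. Then for any solution {X,N} of Tsirelson's equation: (i) for each k ∈ -ℕ, P(X_k = 1) = (1 - pq)/(2 + pq), P(X_k = 2) = (p + pq)/(2 + pq), and P(X_k = 3) = (q + pq)/(2 + pq); (ii) uniqueness in law holds; (iii) the process {X,N} is stationary, i.e., for every n ∈ ℕ, (X_{k+n}, N_{k+n} : k ∈ -ℕ) has the same law as (X_k, N_k : k ∈ -ℕ); (iv) every solution is strong. -/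

import Mathlib

open MeasureTheory ProbabilityTheory Filter Topology
open scoped NNReal ENNReal

universe u v w w₂

noncomputable section

/-- The sub-σ-field generated by the process `Y` from index `k` on; since index `j : ℕ`
stands for time `-j`, this is the σ-field of the past `σ(Y_j : j ≤ -k)`. -/
def past {Ω α : Type*} [MeasurableSpace α] (Y : ℕ → Ω → α) (k : ℕ) : MeasurableSpace Ω :=
  ⨆ j ≥ k, MeasurableSpace.comap (Y j) inferInstance

/-- A solution of Tsirelson's equation with noise law `μ`.  The index `k : ℕ` stands for the
time `-k ∈ -ℕ`, so that time `k - 1` corresponds to index `k + 1`. -/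
structure IsSolution {Ω S G : Type*} [MeasurableSpace Ω] [MeasurableSpace S] [MeasurableSpace G]
    [SMul G S] (P : Measure Ω) (μ : ℕ → Measure G)
    (X : ℕ → Ω → S) (N : ℕ → Ω → G) : Prop where
  measurable_X : ∀ k, Measurable (X k)
  measurable_N : ∀ k, Measurable (N k)
  eqn : ∀ k, X k =ᵐ[P] fun ω => N k ω • X (k + 1) ω
  indep : ∀ k, Indep (MeasurableSpace.comap (N k) inferInstance)
      (past X (k + 1) ⊔ past N (k + 1)) P
  law_N : ∀ k, P.map (N k) = μ k

/-- The joint law of `(X, N)` on the path space `S^{-ℕ} × Σ^{-ℕ}`. -/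
def jointLaw {Ω S G : Type*} [MeasurableSpace Ω] [MeasurableSpace S] [MeasurableSpace G]
    (P : Measure Ω) (X : ℕ → Ω → S) (N : ℕ → Ω → G) : Measure ((ℕ → S) × (ℕ → G)) :=
  P.map fun ω => (fun k => X k ω, fun k => N k ω)

/-- A solution is strong if each `X k` is a.s. equal to a `past N k`-measurable function,
i.e. `X k` is measurable for the `P`-completion of `σ(N_j : j ≤ -k)`. -/
def IsStrong {Ω S G : Type*} [MeasurableSpace Ω] [MeasurableSpace S] [MeasurableSpace G]
    (P : Measure Ω) (X : ℕ → Ω → S) (N : ℕ → Ω → G) : Prop :=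
  ∀ k, ∃ Y : Ω → S, Measurable[past N k] Y ∧ X k =ᵐ[P] Y

/-- Triviality of the tail σ-field `⨅ k, m k`. -/
def TailTrivial {Ω : Type*} [MeasurableSpace Ω] (P : Measure Ω)
    (m : ℕ → MeasurableSpace Ω) : Prop :=
  ∀ A : Set Ω, MeasurableSet[⨅ k, m k] A → P A = 0 ∨ P A = 1

/-- Convolution `μ * ν` of a measure on the acting semigroup with a measure on the space:
the pushforward of `μ ⊗ ν` under the action map. -/
def conv {G S : Type*} [MeasurableSpace G] [MeasurableSpace S] [SMul G S]
    (μ : Measure G) (ν : Measure S) : Measure S :=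
  (μ.prod ν).map fun p => p.1 • p.2

/-- Convolution of two measures on the semigroup. -/
def convG {G : Type*} [MeasurableSpace G] [Mul G] (μ ν : Measure G) : Measure G :=
  (μ.prod ν).map fun p => p.1 * p.2

/-- `prodN N n j = N_n · N_{n+1} · ⋯ · N_{n+j}`; in the time-indexing of the paper (index `m`
is time `-m`) this is `N_{k,l}` with `k = -n` and `l = -(n+j)-1 → -∞` as `j → ∞`. -/
def prodN {Ω G : Type*} [Mul G] (N : ℕ → Ω → G) (n : ℕ) : ℕ → Ω → G
  | 0 => N n
  | j + 1 => fun ω => prodN N n j ω * N (n + j + 1) ω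

/-- `convIter μ n j = μ_n * μ_{n+1} * ⋯ * μ_{n+j}`, the law analogue of `prodN`. -/
def convIter {G : Type*} [MeasurableSpace G] [Mul G] (μ : ℕ → Measure G) (n : ℕ) :
    ℕ → Measure G
  | 0 => μ n
  | j + 1 => convG (convIter μ n j) (μ (n + j + 1))

/-- `sigPow G n` is `Σ^{n+1}`, the set of products of `n+1` elements of `Σ = G`. -/
def sigPow (G : Type*) [Mul G] : ℕ → Set G
  | 0 => Set.univ
  | n + 1 => Set.image2 (· * ·) (sigPow G n) Set.univ

/-- Two sub-σ-fields are equal up to `P`-null sets. -/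
def EqModNull {Ω : Type*} [MeasurableSpace Ω] (P : Measure Ω)
    (m₁ m₂ : MeasurableSpace Ω) : Prop :=
  (∀ A, MeasurableSet[m₁] A → ∃ B, MeasurableSet[m₂] B ∧ P (symmDiff A B) = 0) ∧
  (∀ B, MeasurableSet[m₂] B → ∃ A, MeasurableSet[m₁] A ∧ P (symmDiff A B) = 0)

end

section Context

variable {S : Type u} {G : Type v}
  [TopologicalSpace S] [CompactSpace S] [TopologicalSpace.MetrizableSpace S]
  [SecondCountableTopology S] [MeasurableSpace S] [BorelSpace S]
  [TopologicalSpace G] [CompactSpace G] [TopologicalSpace.MetrizableSpace G]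
  [SecondCountableTopology G] [MeasurableSpace G] [BorelSpace G]
  [Semigroup G] [ContinuousMul G]
  [SMul G S] [ContinuousSMul G S] [IsScalarTower G G S]

end Context

section Example

/-- The full transformation semigroup of `S = {1,2,3}` (realized as `Fin 3`), with the
discrete σ-field. -/
instance : MeasurableSpace (Function.End (Fin 3)) := ⊤

/-- `σ⁽¹⁾ : 1 ↦ 2, 2 ↦ 1, 3 ↦ 2` (as `0 ↦ 1, 1 ↦ 0, 2 ↦ 1` on `Fin 3`). -/
def sig1 : Function.End (Fin 3) := ![1, 0, 1]

/-- `σ⁽²⁾ : 1 ↦ 3, 2 ↦ 3, 3 ↦ 1` (as `0 ↦ 2, 1 ↦ 2, 2 ↦ 0` on `Fin 3`). -/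
def sig2 : Function.End (Fin 3) := ![2, 2, 0]

/-! The maps σ⁽¹⁾σ⁽²⁾ and σ⁽²⁾σ⁽¹⁾ are constant, so as soon as the noise switches between σ⁽¹⁾
and σ⁽²⁾ the product `N_k ⋯ N_l` sends all of `S` to one point, and `X_k` is that point whatever
`X_{l-1}` was. As `p, q < 1`, the noise a.s. switches after every time, so `X_k` is a fixed
measurable function of `(N_j)_{j ≤ k}`: every solution is strong, and its law is the image of the
product law of the noise, hence unique. The shifted solution is again a solution, so the law is
stationary; the marginal `ν` of `X_k` is then invariant, `ν = μ * ν`, which in the labels of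
`S = {1,2,3}` reads `ν{2} = p (1 - ν{2})` and `ν{3} = q (1 - ν{3})`. -/

def IsReset (S : Type*) {G : Type*} [SMul G S] (g : G) : Prop :=
  ∀ x y : S, g • x = g • y

/-- The point to which the first resetting product `n 0 * ⋯ * n j` sends `S`; the junk value
`default` if no such product resets. -/
noncomputable def resetValue (S : Type*) {G : Type*} [Mul G] [SMul G S] [Inhabited S]
    (n : ℕ → G) : S :=
  open Classical in
  if h : ∃ j, IsReset S (prodN (fun i (n : ℕ → G) => n i) 0 j n) then
    prodN (fun i (n : ℕ → G) => n i) 0 (Nat.find h) n • default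
  else default

section Reset

variable {Ω S G : Type*}

lemma prodN_eq_prodN_shift [Mul G] (N : ℕ → Ω → G) (k j : ℕ) (ω : Ω) :
    prodN N k j ω = prodN (fun i (n : ℕ → G) => n i) 0 j (fun i => N (k + i) ω) := by
  induction j with
  | zero => rfl
  | succ j ih => simp only [prodN, ih, zero_add, Nat.add_assoc]

variable [Semigroup G] [SMul G S] [IsScalarTower G G S]

lemma IsReset.mul_left {g : G} (hg : IsReset S g) (a : G) : IsReset S (a * g) := fun x y => by
  rw [← smul_eq_mul, smul_assoc, smul_assoc, hg x y]

lemma isReset_prodN_succ {N : ℕ → Ω → G} {k j : ℕ} {ω : Ω}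
    (h : IsReset S (N (k + j) ω * N (k + j + 1) ω)) : IsReset S (prodN N k (j + 1) ω) := by
  cases j with
  | zero => exact h
  | succ j =>
    rw [show prodN N k (j + 2) ω = prodN N k j ω * (N (k + j + 1) ω * N (k + j + 2) ω) from
      mul_assoc _ _ _]
    exact h.mul_left _

end Reset

section Measurability

variable {Ω S G : Type*} [MeasurableSpace Ω] [MeasurableSpace S] [MeasurableSpace G] [Mul G]
  [MeasurableMul₂ G]

lemma measurable_prodN {N : ℕ → Ω → G} (hN : ∀ i, Measurable (N i)) (k : ℕ) :
    ∀ j, Measurable (prodN N k j)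
  | 0 => hN k
  | j + 1 => (measurable_prodN hN k j).mul (hN _)

lemma measurable_resetValue [DiscreteMeasurableSpace G] [SMul G S] [Inhabited S] :
    Measurable (resetValue (G := G) S) := by
  classical
  set R := {n : ℕ → G | ∃ j, IsReset S (prodN (fun i (n : ℕ → G) => n i) 0 j n)}
  have hprod := measurable_prodN (fun i => measurable_pi_apply (X := fun _ : ℕ => G) i) 0
  have hR : MeasurableSet R := by
    simp only [R, Set.ofPred_exists]
    exact .iUnion fun j => hprod j (DiscreteMeasurableSpace.forall_measurableSet {g | IsReset S g})
  refine Measurable.dite (s := R) (f := fun n => prodN (fun i (n : ℕ → G) => n i) 0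
    (Nat.find n.2) n • default) ?_ measurable_const hR
  exact Measurable.find
    (p := fun j (n : R) => IsReset S (prodN (fun i (n : ℕ → G) => n i) 0 j n))
    (fun j => (Measurable.of_discrete (f := fun g : G => g • (default : S))).comp
      ((hprod j).comp measurable_subtype_coe))
    (fun j => measurable_subtype_coe
      (hprod j (DiscreteMeasurableSpace.forall_measurableSet {g | IsReset S g})))
    fun n => n.2

end Measurability

lemma comap_le_past {Ω α : Type*} [MeasurableSpace α] (Y : ℕ → Ω → α) {k i : ℕ}
    (h : k ≤ i) :
    MeasurableSpace.comap (Y i) inferInstance ≤ past Y k :=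
  le_biSup (f := fun j => MeasurableSpace.comap (Y j) inferInstance) h

lemma past_shift_le {Ω α : Type*} [MeasurableSpace α] (Y : ℕ → Ω → α) (n k : ℕ) :
    past (fun m => Y (m + n)) k ≤ past Y (k + n) :=
  iSup₂_le fun _ hj => comap_le_past Y (Nat.add_le_add_right hj n)

namespace IsSolution

variable {Ω S G : Type*} [MeasurableSpace Ω] [MeasurableSpace S] [MeasurableSpace G] [SMul G S]
  {P : Measure Ω} {μ : ℕ → Measure G} {X : ℕ → Ω → S} {N : ℕ → Ω → G}

lemma shift (hsol : IsSolution P μ X N) (n : ℕ) :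
    IsSolution P (fun k => μ (k + n)) (fun k => X (k + n)) (fun k => N (k + n)) where
  measurable_X k := hsol.measurable_X _
  measurable_N k := hsol.measurable_N _
  eqn k := by simpa only [Nat.add_right_comm k 1 n] using hsol.eqn (k + n)
  indep k := by
    refine indep_of_indep_of_le_right (hsol.indep (k + n)) (sup_le_sup ?_ ?_) <;>
      simpa only [Nat.add_right_comm k 1 n] using past_shift_le _ n (k + 1)
  law_N k := hsol.law_N _

lemma measure_iInter_preimage_N [IsProbabilityMeasure P] (hsol : IsSolution P μ X N)
    (s : Finset ℕ) {t : ℕ → Set G} (ht : ∀ i, MeasurableSet (t i)) :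
    P (⋂ i ∈ s, N i ⁻¹' t i) = ∏ i ∈ s, μ i (t i) := by
  classical
  refine Finset.induction_on_min s (by simp) fun a s hlt ih => ?_
  have hpast : MeasurableSet[past N (a + 1)] (⋂ i ∈ s, N i ⁻¹' t i) :=
    .biInter s.countable_toSet fun i hi => comap_le_past N (hlt i hi) _ ⟨t i, ht i, rfl⟩
  rw [Finset.set_biInter_insert, Finset.prod_insert fun ha => (hlt a ha).false,
    (Indep_iff _ _ _).1 (hsol.indep a) _ _ ⟨t a, ht a, rfl⟩
      (le_sup_right (a := past X (a + 1)) _ hpast),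
    ih, ← hsol.law_N a, Measure.map_apply (hsol.measurable_N a) (ht a)]

lemma map_noise_eq_infinitePi [IsProbabilityMeasure P] (hsol : IsSolution P μ X N) :
    P.map (fun ω i => N i ω) = Measure.infinitePi μ := by
  have : ∀ k, IsProbabilityMeasure (μ k) := fun k => by
    rw [← hsol.law_N k]; exact Measure.isProbabilityMeasure_map (hsol.measurable_N k).aemeasurable
  refine Measure.eq_infinitePi μ fun s t ht => ?_
  rw [Measure.map_apply (measurable_pi_lambda _ hsol.measurable_N)
    (.pi s.countable_toSet fun i _ => ht i), ← hsol.measure_iInter_preimage_N s ht]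
  congr 1
  ext ω
  simp

lemma ae_forall_mem {s : Set G} (hsol : IsSolution P μ X N)
    (hs : ∀ k, ∀ᵐ g ∂μ k, g ∈ s) :
    ∀ᵐ ω ∂P, ∀ i, N i ω ∈ s :=
  ae_all_iff.2 fun i => ae_of_ae_map (hsol.measurable_N i).aemeasurable (hsol.law_N i ▸ hs i)

lemma map_X_eq_conv [IsProbabilityMeasure P] [MeasurableSMul₂ G S] (hsol : IsSolution P μ X N)
    (k : ℕ) : P.map (X k) = conv (μ k) (P.map (X (k + 1))) := by
  have hind : IndepFun (N k) (X (k + 1)) P := (IndepFun_iff_Indep _ _ _).2 <|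
    indep_of_indep_of_le_right (hsol.indep k) (le_sup_of_le_left (comap_le_past X le_rfl))
  rw [conv, ← hsol.law_N k, ← hind.map_prod_eq_prod_map_map (hsol.measurable_N k).aemeasurable
    (hsol.measurable_X _).aemeasurable,
    Measure.map_map (g := fun p : G × S => p.1 • p.2) (measurable_fst.smul measurable_snd)
    ((hsol.measurable_N k).prodMk (hsol.measurable_X _)), Measure.map_congr (hsol.eqn k)]
  rfl

section Constant

variable {μ : Measure G} [MeasurableSingletonClass G] [IsProbabilityMeasure P]

lemma measure_forall_eq_eq_zero (hsol : IsSolution P (fun _ => μ) X N) {g : G} (hg : μ {g} < 1)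
    (k : ℕ) : P {ω | ∀ i, N (k + i) ω = g} = 0 := by
  refine le_antisymm (ge_of_tendsto' (ENNReal.tendsto_pow_atTop_nhds_zero_of_lt_one hg)
    fun m => ?_) bot_le
  calc P {ω | ∀ i, N (k + i) ω = g} ≤ P (⋂ i ∈ Finset.Ico k (k + m), N i ⁻¹' {g}) :=
        measure_mono fun ω hω => Set.mem_iInter₂.2 fun i hi => by
          simpa [Nat.add_sub_cancel' (Finset.mem_Ico.1 hi).1] using hω (i - k)
    _ = μ {g} ^ m := by
        rw [hsol.measure_iInter_preimage_N _ fun _ => measurableSet_singleton g, Finset.prod_const,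
          Nat.card_Ico, Nat.add_sub_cancel_left]

lemma ae_exists_ne_succ [Countable G] (hsol : IsSolution P (fun _ => μ) X N)
    (hμ : ∀ g, μ {g} < 1) (k : ℕ) :
    ∀ᵐ ω ∂P, ∃ i, N (k + i) ω ≠ N (k + i + 1) ω := by
  refine measure_mono_null (fun ω hω => ?_)
    (measure_iUnion_null fun g => hsol.measure_forall_eq_eq_zero (hμ g) k)
  replace hω : ∀ i, N (k + i) ω = N (k + i + 1) ω := by simpa using hω
  refine Set.mem_iUnion.2 ⟨N k ω, fun i => ?_⟩
  induction i with
  | zero => rfl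
  | succ i ih => exact (hω i).symm.trans ih

end Constant

section Reset

variable [Semigroup G] [IsScalarTower G G S]

lemma ae_eq_prodN_smul (hsol : IsSolution P μ X N) (k j : ℕ) :
    X k =ᵐ[P] fun ω => prodN N k j ω • X (k + j + 1) ω := by
  induction j with
  | zero => exact hsol.eqn k
  | succ j ih =>
    filter_upwards [ih, hsol.eqn (k + j + 1)] with ω h₁ h₂
    rw [h₁, h₂, ← smul_assoc]
    rfl

variable [Inhabited S]

lemma ae_eq_resetValue (hsol : IsSolution P μ X N) {k : ℕ}
    (hk : ∀ᵐ ω ∂P, ∃ j, IsReset S (prodN N k j ω)) :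
    X k =ᵐ[P] fun ω => resetValue S (fun i => N (k + i) ω) := by
  classical
  filter_upwards [hk, ae_all_iff.2 (hsol.ae_eq_prodN_smul k)] with ω hreset hX
  simp only [prodN_eq_prodN_shift N k _ ω] at hreset hX
  rw [resetValue, dif_pos hreset, hX (Nat.find hreset)]
  exact Nat.find_spec hreset _ _

variable [DiscreteMeasurableSpace G] [MeasurableMul₂ G]

lemma isStrong (hsol : IsSolution P μ X N)
    (hsync : ∀ k, ∀ᵐ ω ∂P, ∃ j, IsReset S (prodN N k j ω)) :
    IsStrong P X N := fun k =>
  ⟨_, measurable_resetValue.comp <| @measurable_pi_lambda _ _ _ (past N k) _ _ fun i =>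
      measurable_iff_comap_le.2 (comap_le_past N (Nat.le_add_right k i)),
    hsol.ae_eq_resetValue (hsync k)⟩

lemma jointLaw_eq_map_infinitePi [IsProbabilityMeasure P] (hsol : IsSolution P μ X N)
    (hsync : ∀ k, ∀ᵐ ω ∂P, ∃ j, IsReset S (prodN N k j ω)) :
    jointLaw P X N = (Measure.infinitePi μ).map
      fun n => (fun k => resetValue S (fun i => n (k + i)), n) := by
  have hread : Measurable fun n : ℕ → G => (fun k => resetValue S (fun i => n (k + i)), n) :=
    (measurable_pi_lambda _ fun k => measurable_resetValue.comp <|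
      measurable_pi_lambda (fun (n : ℕ → G) i => n (k + i)) fun _ => measurable_pi_apply _).prodMk
        measurable_id
  rw [← hsol.map_noise_eq_infinitePi, Measure.map_map hread
    (measurable_pi_lambda _ hsol.measurable_N), jointLaw]
  refine Measure.map_congr ?_
  filter_upwards [ae_all_iff.2 fun k => hsol.ae_eq_resetValue (hsync k)] with ω hω
  exact Prod.ext (funext hω) rfl

end Reset

end IsSolution

lemma conv_apply_eq_tsum {G S : Type*} [MeasurableSpace G] [MeasurableSpace S] [SMul G S]
    [MeasurableSMul₂ G S] [Countable G] [MeasurableSingletonClass G] (μ : Measure G)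
    (ν : Measure S) [SFinite ν] {B : Set S} (hB : MeasurableSet B) :
    conv μ ν B = ∑' g, μ {g} * ν ((g • ·) ⁻¹' B) := by
  have hsmul : Measurable fun p : G × S => p.1 • p.2 := measurable_fst.smul measurable_snd
  rw [conv, Measure.map_apply hsmul hB, Measure.prod_apply (hsmul hB), lintegral_countable']
  simp only [mul_comm]
  rfl

lemma IsSolution.map_X_eq_of_jointLaw_eq {Ω Ω' S G : Type*} [MeasurableSpace Ω]
    [MeasurableSpace Ω'] [MeasurableSpace S] [MeasurableSpace G] [SMul G S] {P : Measure Ω}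
    {P' : Measure Ω'} {μ μ' : ℕ → Measure G} {X : ℕ → Ω → S} {N : ℕ → Ω → G}
    {X' : ℕ → Ω' → S} {N' : ℕ → Ω' → G} (hsol : IsSolution P μ X N)
    (hsol' : IsSolution P' μ' X' N') (h : jointLaw P X N = jointLaw P' X' N') (k : ℕ) :
    P.map (X k) = P'.map (X' k) := by
  have hk := congrArg (Measure.map fun z : (ℕ → S) × (ℕ → G) => z.1 k) h
  have hfst : Measurable fun z : (ℕ → S) × (ℕ → G) => z.1 k :=
    (measurable_pi_apply k).comp measurable_fst
  rwa [jointLaw, jointLaw, Measure.map_map hfst, Measure.map_map hfst] at hk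
  · exact (measurable_pi_lambda _ hsol'.measurable_X).prodMk
      (measurable_pi_lambda _ hsol'.measurable_N)
  · exact (measurable_pi_lambda _ hsol.measurable_X).prodMk
      (measurable_pi_lambda _ hsol.measurable_N)

instance : DecidableEq (Function.End (Fin 3)) := inferInstanceAs (DecidableEq (Fin 3 → Fin 3))

instance : Countable (Function.End (Fin 3)) := inferInstanceAs (Countable (Fin 3 → Fin 3))

instance : DiscreteMeasurableSpace (Function.End (Fin 3)) := ⟨fun _ => trivial⟩

instance : MeasurableMul₂ (Function.End (Fin 3)) := ⟨measurable_of_countable _⟩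

instance : MeasurableSMul₂ (Function.End (Fin 3)) (Fin 3) := ⟨measurable_of_countable _⟩

lemma isReset_mul_of_ne {f g : Function.End (Fin 3)} (hf : f ∈ ({sig1, sig2} : Set _))
    (hg : g ∈ ({sig1, sig2} : Set _)) (hfg : f ≠ g) : IsReset (Fin 3) (f * g) := by
  unfold IsReset
  rcases hf with rfl | rfl <;> rcases hg with rfl | rfl <;> first | exact absurd rfl hfg | decide

section Noise

variable {μ : Measure (Function.End (Fin 3))}

lemma ae_mem_pair [IsProbabilityMeasure μ] {p q : ℝ} (hp : 0 ≤ p) (hq : 0 ≤ q)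
    (hpq : p + q = 1)
    (hμ1 : μ {sig1} = ENNReal.ofReal p) (hμ2 : μ {sig2} = ENNReal.ofReal q) :
    ∀ᵐ g ∂μ, g ∈ ({sig1, sig2} : Set (Function.End (Fin 3))) := by
  refine ae_iff.2 (prob_compl_eq_zero_iff (Set.toFinite _).measurableSet |>.2 ?_)
  rw [Set.insert_eq,
    measure_union (Set.disjoint_singleton.2 (by decide)) (measurableSet_singleton _),
    hμ1, hμ2, ← ENNReal.ofReal_add hp hq, hpq, ENNReal.ofReal_one]

lemma measure_singleton_lt_one
    (hsupp : ∀ᵐ g ∂μ, g ∈ ({sig1, sig2} : Set (Function.End (Fin 3))))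
    (h1 : μ {sig1} < 1) (h2 : μ {sig2} < 1) (g : Function.End (Fin 3)) : μ {g} < 1 := by
  rcases eq_or_ne g sig1 with rfl | hg1
  · exact h1
  rcases eq_or_ne g sig2 with rfl | hg2
  · exact h2
  rw [measure_mono_null (Set.singleton_subset_iff.2 (by simp [hg1, hg2])) (ae_iff.1 hsupp)]
  exact zero_lt_one

lemma conv_apply_of_ae_mem_pair
    (hsupp : ∀ᵐ g ∂μ, g ∈ ({sig1, sig2} : Set (Function.End (Fin 3))))
    (ν : Measure (Fin 3)) [SFinite ν] (B : Set (Fin 3)) :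
    conv μ ν B = μ {sig1} * ν (sig1 ⁻¹' B) + μ {sig2} * ν (sig2 ⁻¹' B) := by
  rw [conv_apply_eq_tsum μ ν B.toFinite.measurableSet, tsum_eq_sum (s := {sig1, sig2}),
    Finset.sum_pair (by decide)]
  · rfl
  · intro g hg
    rw [measure_mono_null (Set.singleton_subset_iff.2 (by simpa using hg)) (ae_iff.1 hsupp),
      zero_mul]

variable {Ω : Type*} [MeasurableSpace Ω] {P : Measure Ω} [IsProbabilityMeasure P]
  {X : ℕ → Ω → Fin 3} {N : ℕ → Ω → Function.End (Fin 3)}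

lemma ae_exists_isReset_prodN (hsol : IsSolution P (fun _ => μ) X N)
    (hsupp : ∀ᵐ g ∂μ, g ∈ ({sig1, sig2} : Set (Function.End (Fin 3))))
    (hμ : ∀ g, μ {g} < 1) (k : ℕ) :
    ∀ᵐ ω ∂P, ∃ j, IsReset (Fin 3) (prodN N k j ω) := by
  filter_upwards [hsol.ae_forall_mem fun _ => hsupp, hsol.ae_exists_ne_succ hμ k]
    with ω hmem ⟨i, hi⟩
  exact ⟨i + 1, isReset_prodN_succ (isReset_mul_of_ne (hmem _) (hmem _) hi)⟩

lemma jointLaw_eq_of_isSolution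
    (hsupp : ∀ᵐ g ∂μ, g ∈ ({sig1, sig2} : Set (Function.End (Fin 3))))
    (hμ : ∀ g, μ {g} < 1)
    {Ω' : Type*} [MeasurableSpace Ω'] {P' : Measure Ω'} [IsProbabilityMeasure P']
    {X' : ℕ → Ω' → Fin 3} {N' : ℕ → Ω' → Function.End (Fin 3)}
    (hsol : IsSolution P (fun _ => μ) X N) (hsol' : IsSolution P' (fun _ => μ) X' N') :
    jointLaw P X N = jointLaw P' X' N' :=
  (hsol.jointLaw_eq_map_infinitePi (ae_exists_isReset_prodN hsol hsupp hμ)).trans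
    (hsol'.jointLaw_eq_map_infinitePi (ae_exists_isReset_prodN hsol' hsupp hμ)).symm

end Noise

lemma sig1_preimage_one : sig1 ⁻¹' {1} = {1}ᶜ := by ext x; fin_cases x <;> simp [sig1]

lemma sig2_preimage_one : sig2 ⁻¹' {1} = ∅ := by ext x; fin_cases x <;> simp [sig2]

lemma sig1_preimage_two : sig1 ⁻¹' {2} = ∅ := by ext x; fin_cases x <;> simp [sig1]

lemma sig2_preimage_two : sig2 ⁻¹' {2} = {2}ᶜ := by ext x; fin_cases x <;> simp [sig2]

lemma measureReal_eq_of_conv_eq {μ : Measure (Function.End (Fin 3))}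
    (hsupp : ∀ᵐ g ∂μ, g ∈ ({sig1, sig2} : Set (Function.End (Fin 3))))
    {p q : ℝ} (hp : 0 ≤ p) (hq : 0 ≤ q) (hμ1 : μ {sig1} = ENNReal.ofReal p)
    (hμ2 : μ {sig2} = ENNReal.ofReal q)
    {ν : Measure (Fin 3)} [IsFiniteMeasure ν] (hν : conv μ ν = ν) (B : Set (Fin 3)) :
    ν.real B = p * ν.real (sig1 ⁻¹' B) + q * ν.real (sig2 ⁻¹' B) := by
  conv_lhs => rw [← hν]
  rw [measureReal_def, conv_apply_of_ae_mem_pair hsupp, hμ1, hμ2, ENNReal.toReal_add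
    (by finiteness) (by finiteness), ENNReal.toReal_mul, ENNReal.toReal_mul,
    ENNReal.toReal_ofReal hp, ENNReal.toReal_ofReal hq, measureReal_def, measureReal_def]

lemma measure_singleton_of_conv_eq {μ : Measure (Function.End (Fin 3))}
    (hsupp : ∀ᵐ g ∂μ, g ∈ ({sig1, sig2} : Set (Function.End (Fin 3))))
    {p q : ℝ} (hp : 0 < p) (hq : 0 < q) (hpq : p + q = 1) (hμ1 : μ {sig1} = ENNReal.ofReal p)
    (hμ2 : μ {sig2} = ENNReal.ofReal q) {ν : Measure (Fin 3)} [IsProbabilityMeasure ν]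
    (hν : conv μ ν = ν) :
    ν {0} = ENNReal.ofReal ((1 - p * q) / (2 + p * q)) ∧
      ν {1} = ENNReal.ofReal ((p + p * q) / (2 + p * q)) ∧
      ν {2} = ENNReal.ofReal ((q + p * q) / (2 + p * q)) := by
  have hrec := measureReal_eq_of_conv_eq hsupp hp.le hq.le hμ1 hμ2 hν
  have h1 : ν.real {1} = p * (1 - ν.real {1}) := by
    simpa [sig1_preimage_one, sig2_preimage_one, probReal_compl_eq_one_sub] using hrec {1}
  have h2 : ν.real {2} = q * (1 - ν.real {2}) := by
    simpa [sig1_preimage_two, sig2_preimage_two, probReal_compl_eq_one_sub] using hrec {2}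
  have h0 : ν.real {0} + ν.real {1} + ν.real {2} = 1 := by
    rw [← probReal_univ (μ := ν), ← Finset.coe_univ, ← sum_measureReal_singleton,
      Fin.sum_univ_three]
  have hd : (0 : ℝ) < 2 + p * q := by positivity
  refine ⟨?_, ?_, ?_⟩ <;> rw [← ofReal_measureReal] <;> congr 1 <;> rw [eq_div_iff hd.ne']
  · linear_combination (2 + p * q) * h0 - (1 + q) * h1 - (1 + p) * h2
      + (ν.real {1} + ν.real {2} - 1) * hpq
  · linear_combination (1 + q) * h1 - ν.real {1} * hpq
  · linear_combination (1 + p) * h2 - ν.real {2} * hpq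


/-- For the i.i.d. noise law `μ = p δ_{σ⁽¹⁾} + q δ_{σ⁽²⁾}` on the
transformation semigroup of `{1,2,3}`, every solution has the explicit marginals (i),
uniqueness in law holds (ii), every solution is stationary (iii) and strong (iv). -/
theorem tsirelson_transformation_semigroup_example
    (p q : ℝ) (hp : 0 < p) (hq : 0 < q) (hpq : p + q = 1)
    (μ : Measure (Function.End (Fin 3))) (hμprob : IsProbabilityMeasure μ)
    (hμ1 : μ {sig1} = ENNReal.ofReal p) (hμ2 : μ {sig2} = ENNReal.ofReal q)
    {Ω : Type u} [MeasurableSpace Ω] (P : Measure Ω) [IsProbabilityMeasure P]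
    (X : ℕ → Ω → Fin 3) (N : ℕ → Ω → Function.End (Fin 3))
    (hsol : IsSolution P (fun _ => μ) X N) :
    (∀ k, P {ω | X k ω = 0} = ENNReal.ofReal ((1 - p * q) / (2 + p * q)) ∧
          P {ω | X k ω = 1} = ENNReal.ofReal ((p + p * q) / (2 + p * q)) ∧
          P {ω | X k ω = 2} = ENNReal.ofReal ((q + p * q) / (2 + p * q))) ∧
    (∀ (Ω' : Type v) (_ : MeasurableSpace Ω') (P' : Measure Ω')
        (X' : ℕ → Ω' → Fin 3) (N' : ℕ → Ω' → Function.End (Fin 3)),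
        IsProbabilityMeasure P' → IsSolution P' (fun _ => μ) X' N' →
        jointLaw P' X' N' = jointLaw P X N) ∧
    (∀ n : ℕ, P.map (fun ω => (fun m => X (m + n) ω, fun m => N (m + n) ω)) =
        P.map (fun ω => (fun m => X m ω, fun m => N m ω))) ∧
    IsStrong P X N := by
  have hsupp := ae_mem_pair hp.le hq.le hpq hμ1 hμ2
  have hatom := measure_singleton_lt_one hsupp (hμ1 ▸ ENNReal.ofReal_lt_one.2 (by linarith))
    (hμ2 ▸ ENNReal.ofReal_lt_one.2 (by linarith))
  have hstat (n : ℕ) := jointLaw_eq_of_isSolution hsupp hatom (hsol.shift n) hsol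
  have hmarg (k : ℕ) : P.map (X k) = P.map (X 0) := by
    simpa using (hsol.shift k).map_X_eq_of_jointLaw_eq hsol (hstat k) 0
  have : IsProbabilityMeasure (P.map (X 0)) :=
    Measure.isProbabilityMeasure_map (hsol.measurable_X 0).aemeasurable
  have hinv : conv μ (P.map (X 0)) = P.map (X 0) := by
    conv_lhs => rw [← hmarg 1]
    exact (hsol.map_X_eq_conv 0).symm
  refine ⟨fun k => ?_,
    fun _ _ _ _ _ _ hsol' => jointLaw_eq_of_isSolution hsupp hatom hsol' hsol, hstat,
    hsol.isStrong (ae_exists_isReset_prodN hsol hsupp hatom)⟩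
  have hk (x : Fin 3) : P {ω | X k ω = x} = P.map (X 0) {x} := by
    rw [← hmarg k, Measure.map_apply (hsol.measurable_X k) (measurableSet_singleton x)]; rfl
  simpa only [hk] using measure_singleton_of_conv_eq hsupp hp hq hpq hμ1 hμ2 hinv

end Example
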